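/- Let A be SPD partitioned as [[A_ff, A_fc],[A_cf, A_cc]] with P_ideal = [−A_ff⁻¹A_fc; I]. Then for every u ∈ ℝⁿ, taking w_c = u_c gives the energy-norm bound ‖u − P_ideal u_c‖_A² ≤ ‖A_ff⁻¹‖ · ‖A u‖². In particular, if ‖A_ff⁻¹‖ ≤ K/‖A‖ then P_ideal satisfies the strong approximation property with constant K. -/

import Mathlib

/-!
The error `u - P_ideal u_c` vanishes at the C-points, and on the F-points it equals
`A_ff⁻¹ r` with `r = (A u)_f`, because `A_ff (u_f + A_ff⁻¹ A_fc u_c) = (A u)_f`. Its energy is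
therefore `r ⬝ A_ff⁻¹ r ≤ ‖A_ff⁻¹‖ ‖r‖² ≤ ‖A_ff⁻¹‖ ‖A u‖²`.
-/

open scoped Matrix.Norms.L2Operator
open Matrix

namespace Matrix

variable {f c : Type*} [Fintype f] [Fintype c]

lemma dotProduct_mulVec_le_l2_opNorm_mul [DecidableEq f] (M : Matrix f f ℝ) (r : f → ℝ) :
    r ⬝ᵥ M *ᵥ r ≤ ‖M‖ * (r ⬝ᵥ r) := by
  set x : EuclideanSpace ℝ f := WithLp.toLp 2 r
  have hx : r ⬝ᵥ r = ‖x‖ ^ 2 := by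
    rw [← real_inner_self_eq_norm_sq, EuclideanSpace.inner_eq_star_dotProduct, star_trivial]
  calc r ⬝ᵥ M *ᵥ r = inner ℝ x (toEuclideanCLM (𝕜 := ℝ) M x) := (inner_toEuclideanCLM M x x).symm
    _ ≤ ‖x‖ * ‖toEuclideanCLM (𝕜 := ℝ) M x‖ := real_inner_le_norm _ _
    _ ≤ ‖x‖ * (‖M‖ * ‖x‖) := by
        gcongr
        exact (toEuclideanCLM (𝕜 := ℝ) M).le_opNorm x
    _ = ‖M‖ * (r ⬝ᵥ r) := by rw [hx]; ring

lemma dotProduct_self_comp_inl_le (v : f ⊕ c → ℝ) :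
    v ∘ Sum.inl ⬝ᵥ v ∘ Sum.inl ≤ v ⬝ᵥ v := by
  rw [← Sum.elim_comp_inl_inr v, sumElim_dotProduct_sumElim]
  simp only [Sum.elim_comp_inl]
  have : 0 ≤ v ∘ Sum.inr ⬝ᵥ v ∘ Sum.inr := Fintype.sum_nonneg fun _ => mul_self_nonneg _
  linarith

lemma fromBlocks_mulVec_sumElim_zero_dotProduct (Aff : Matrix f f ℝ) (Afc : Matrix f c ℝ)
    (Acf : Matrix c f ℝ) (Acc : Matrix c c ℝ) (e : f → ℝ) :
    fromBlocks Aff Afc Acf Acc *ᵥ Sum.elim e 0 ⬝ᵥ Sum.elim e 0 = Aff *ᵥ e ⬝ᵥ e := by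
  simp [fromBlocks_mulVec, sumElim_dotProduct_sumElim]

variable [DecidableEq f] [DecidableEq c] (Aff : Matrix f f ℝ) (Afc : Matrix f c ℝ)

noncomputable def idealInterp : Matrix (f ⊕ c) c ℝ :=
  fromRows (-(Aff⁻¹ * Afc)) 1

variable {Aff Afc}

lemma sub_idealInterp_mulVec_comp_inr (Acf : Matrix c f ℝ) (Acc : Matrix c c ℝ)
    (hAff : IsUnit Aff.det) (u : f ⊕ c → ℝ) :
    u - idealInterp Aff Afc *ᵥ (u ∘ Sum.inr) =
      Sum.elim (Aff⁻¹ *ᵥ ((fromBlocks Aff Afc Acf Acc *ᵥ u) ∘ Sum.inl)) 0 := by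
  rw [← Sum.elim_comp_inl_inr u, fromBlocks_mulVec]
  ext (i | j)
  · simp [idealInterp, fromRows_mulVec, mulVec_add, mulVec_mulVec, nonsing_inv_mul _ hAff,
      neg_mulVec]
  · simp [idealInterp, fromRows_mulVec]

theorem energy_sub_idealInterp_mulVec_le (Acf : Matrix c f ℝ) (Acc : Matrix c c ℝ)
    (hAff : IsUnit Aff.det) (u : f ⊕ c → ℝ) :
    fromBlocks Aff Afc Acf Acc *ᵥ (u - idealInterp Aff Afc *ᵥ (u ∘ Sum.inr)) ⬝ᵥ
        (u - idealInterp Aff Afc *ᵥ (u ∘ Sum.inr)) ≤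
      ‖Aff⁻¹‖ * (fromBlocks Aff Afc Acf Acc *ᵥ u ⬝ᵥ fromBlocks Aff Afc Acf Acc *ᵥ u) := by
  rw [sub_idealInterp_mulVec_comp_inr Acf Acc hAff, fromBlocks_mulVec_sumElim_zero_dotProduct,
    mulVec_mulVec, mul_nonsing_inv _ hAff, one_mulVec]
  set r := (fromBlocks Aff Afc Acf Acc *ᵥ u) ∘ Sum.inl
  calc r ⬝ᵥ Aff⁻¹ *ᵥ r ≤ ‖Aff⁻¹‖ * (r ⬝ᵥ r) := dotProduct_mulVec_le_l2_opNorm_mul _ _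
    _ ≤ _ := by gcongr; exact dotProduct_self_comp_inl_le _

end Matrix

theorem ideal_interp_energy_bound_general (nf nc : ℕ)
    (Aff : Matrix (Fin nf) (Fin nf) ℝ) (Afc : Matrix (Fin nf) (Fin nc) ℝ)
    (Acf : Matrix (Fin nc) (Fin nf) ℝ) (Acc : Matrix (Fin nc) (Fin nc) ℝ)
    (hAff : IsUnit Aff.det)
    (A : Matrix (Fin nf ⊕ Fin nc) (Fin nf ⊕ Fin nc) ℝ)
    (hAdef : A = Matrix.fromBlocks Aff Afc Acf Acc)
    (Pideal : Matrix (Fin nf ⊕ Fin nc) (Fin nc) ℝ)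
    (hP : Pideal = Matrix.fromRows (-(Aff⁻¹ * Afc)) (1 : Matrix (Fin nc) (Fin nc) ℝ)) :
    (∀ u : Fin nf ⊕ Fin nc → ℝ,
        (A.mulVec (u - Pideal.mulVec (fun j => u (Sum.inr j)))) ⬝ᵥ
            (u - Pideal.mulVec (fun j => u (Sum.inr j))) ≤
          ‖Aff⁻¹‖ * ((A.mulVec u) ⬝ᵥ (A.mulVec u))) ∧
    (∀ K : ℝ, ‖Aff⁻¹‖ ≤ K / ‖A‖ →
      ∀ u : Fin nf ⊕ Fin nc → ℝ, ∃ wc : Fin nc → ℝ,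
        (A.mulVec (u - Pideal.mulVec wc)) ⬝ᵥ (u - Pideal.mulVec wc) ≤
          K / ‖A‖ * ((A.mulVec u) ⬝ᵥ (A.mulVec u))) := by
  subst hAdef hP
  have energy_le := energy_sub_idealInterp_mulVec_le (Afc := Afc) Acf Acc hAff
  refine ⟨energy_le, fun K hK u => ⟨u ∘ Sum.inr, (energy_le u).trans ?_⟩⟩
  gcongr
  exact Fintype.sum_nonneg fun _ => mul_self_nonneg _

/-- energy-norm bound for ideal interpolation, and the SAP consequence. -/
theorem ideal_interp_energy_bound (nf nc : ℕ)
    (Aff : Matrix (Fin nf) (Fin nf) ℝ) (Afc : Matrix (Fin nf) (Fin nc) ℝ)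
    (Acf : Matrix (Fin nc) (Fin nf) ℝ) (Acc : Matrix (Fin nc) (Fin nc) ℝ)
    (hA : (Matrix.fromBlocks Aff Afc Acf Acc).PosDef)
    (hAff : IsUnit Aff.det)
    (A : Matrix (Fin nf ⊕ Fin nc) (Fin nf ⊕ Fin nc) ℝ)
    (hAdef : A = Matrix.fromBlocks Aff Afc Acf Acc)
    (Pideal : Matrix (Fin nf ⊕ Fin nc) (Fin nc) ℝ)
    (hP : Pideal = Matrix.fromRows (-(Aff⁻¹ * Afc)) (1 : Matrix (Fin nc) (Fin nc) ℝ)) :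
    (∀ u : Fin nf ⊕ Fin nc → ℝ,
        (A.mulVec (u - Pideal.mulVec (fun j => u (Sum.inr j)))) ⬝ᵥ
            (u - Pideal.mulVec (fun j => u (Sum.inr j))) ≤
          ‖Aff⁻¹‖ * ((A.mulVec u) ⬝ᵥ (A.mulVec u))) ∧
    (∀ K : ℝ, ‖Aff⁻¹‖ ≤ K / ‖A‖ →
      ∀ u : Fin nf ⊕ Fin nc → ℝ, ∃ wc : Fin nc → ℝ,
        (A.mulVec (u - Pideal.mulVec wc)) ⬝ᵥ (u - Pideal.mulVec wc) ≤
          K / ‖A‖ * ((A.mulVec u) ⬝ᵥ (A.mulVec u))) :=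
  ideal_interp_energy_bound_general nf nc Aff Afc Acf Acc hAff A hAdef Pideal hP
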